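/- arXiv:1202.5160 — 2 statements merged into one kernel-verified Lean document; each statement's English description precedes it below -/
import Mathlib

section
/- For $j = 2,\ldots,k$, define the control variate $Z^{(j)}(\theta) = \frac{\nu_{h_j}(\theta)/d_j - \nu_{h_1}(\theta)}{\sum_{s=1}^k a_s \nu_{h_s}(\theta)/d_s}$ with $d_s = m_{h_s}/m_{h_1}$. Then $Z^{(j)}(\theta) = \frac{\nu_{h_j,y}(\theta) - \nu_{h_1,y}(\theta)}{\sum_{s=1}^k a_s \nu_{h_s,y}(\theta)}$ and the expectation of $Z^{(j)}(\theta)$ under the mixture $\bar\nu_{\cdot y} = \sum_{s=1}^k a_s \nu_{h_s,y}$ is zero. -/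
open MeasureTheory

/-- For `j ≥ 2`, the control variate
`Z^{(j)}(θ) = (ν_{h_j}(θ)/d_j - ν_{h_1}(θ)) / (∑ a_s ν_{h_s}(θ)/d_s)` (with
`d_s = m_{h_s}/m_{h_1}`) also equals
`(ν_{h_j,y}(θ) - ν_{h_1,y}(θ)) / (∑ a_s ν_{h_s,y}(θ))` (wherever the likelihood and the
mixture denominator are positive), and its expectation under the mixture
`ν̄ = ∑ a_s ν_{h_s,y}` is zero. -/
theorem stmt5 {Θ : Type*} [MeasurableSpace Θ] (μ : Measure Θ) [SigmaFinite μ]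
    (k : ℕ) [NeZero k]
    (p : Θ → ℝ) (νs : Fin k → Θ → ℝ)
    (hp : ∀ θ, 0 ≤ p θ) (hνs : ∀ s θ, 0 ≤ νs s θ)
    (hmp : Measurable p) (hmνs : ∀ s, Measurable (νs s))
    (a : Fin k → ℝ) (ha : ∀ s, 0 < a s) (hasum : ∑ s, a s = 1)
    (ms : Fin k → ℝ)
    (hms : ∀ s, ms s = ∫ θ, p θ * νs s θ ∂μ)
    (hmspos : ∀ s, 0 < ms s)
    (hints : ∀ s, Integrable (fun θ => p θ * νs s θ) μ)
    (j : Fin k) (hj : j ≠ 0)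
    (Z : Θ → ℝ)
    (hZ : ∀ θ, Z θ = (νs j θ / (ms j / ms 0) - νs 0 θ) /
      (∑ s, a s * νs s θ / (ms s / ms 0))) :
    (∀ θ, 0 < p θ → 0 < ∑ s, a s * νs s θ →
        Z θ = (p θ * νs j θ / ms j - p θ * νs 0 θ / ms 0) /
          (∑ s, a s * (p θ * νs s θ / ms s))) ∧
    ∫ θ, Z θ * (∑ s, a s * (p θ * νs s θ / ms s)) ∂μ = 0 := by
  have hm0 := hmspos 0
  have hterm : ∀ θ s, 0 ≤ a s * νs s θ / (ms s / ms 0) := fun θ s =>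
    div_nonneg (mul_nonneg (ha s).le (hνs s θ)) (div_nonneg (hmspos s).le hm0.le)
  have hkey : ∀ θ, (∑ s, a s * (p θ * νs s θ / ms s)) =
      (p θ / ms 0) * ∑ s, a s * νs s θ / (ms s / ms 0) := by
    intro θ
    rw [Finset.mul_sum]
    refine Finset.sum_congr rfl fun s _ => ?_
    have h1 := (hmspos s).ne'
    have h2 := hm0.ne'
    field_simp
  have hall0 : ∀ θ, (∑ s, a s * νs s θ / (ms s / ms 0)) = 0 → ∀ s, νs s θ = 0 := by
    intro θ h0 s
    have h := (Finset.sum_eq_zero_iff_of_nonneg (fun s _ => hterm θ s)).mp h0 s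
      (Finset.mem_univ s)
    have hms' : ms s / ms 0 ≠ 0 := (div_pos (hmspos s) hm0).ne'
    rcases div_eq_zero_iff.mp h with h' | h'
    · rcases mul_eq_zero.mp h' with h'' | h''
      · exact absurd h'' (ha s).ne'
      · exact h''
    · exact absurd h' hms'
  have hpt : ∀ θ, Z θ * (∑ s, a s * (p θ * νs s θ / ms s)) =
      p θ * νs j θ / ms j - p θ * νs 0 θ / ms 0 := by
    intro θ
    rw [hkey, hZ]
    set D := ∑ s, a s * νs s θ / (ms s / ms 0) with hD
    by_cases hD0 : D = 0
    · have hall := hall0 θ hD0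
      simp [hD0, hall j, hall 0]
    · have h1 : (νs j θ / (ms j / ms 0) - νs 0 θ) / D * (p θ / ms 0 * D) =
          (νs j θ / (ms j / ms 0) - νs 0 θ) * (p θ / ms 0) := by
        field_simp
      rw [h1]
      have h2 := (hmspos j).ne'
      have h3 := hm0.ne'
      field_simp
  constructor
  · intro θ hpθ hmix
    have hDne : (∑ s, a s * νs s θ / (ms s / ms 0)) ≠ 0 := by
      intro h0
      have hall := hall0 θ h0
      have : (∑ s, a s * νs s θ) = 0 := Finset.sum_eq_zero fun s _ => by
        rw [hall s, mul_zero]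
      exact hmix.ne' this
    have hSne : (∑ s, a s * (p θ * νs s θ / ms s)) ≠ 0 := by
      rw [hkey]
      exact mul_ne_zero (div_pos hpθ hm0).ne' hDne
    exact (eq_div_iff hSne).mpr (hpt θ)
  · have : ∫ θ, Z θ * (∑ s, a s * (p θ * νs s θ / ms s)) ∂μ =
        ∫ θ, (p θ * νs j θ / ms j - p θ * νs 0 θ / ms 0) ∂μ := by
      exact integral_congr_ae (Filter.Eventually.of_forall hpt)
    rw [this, integral_sub ((hints j).div_const _) ((hints 0).div_const _)]
    have hj1 : ∫ θ, p θ * νs j θ / ms j ∂μ = 1 := by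
      rw [integral_div, ← hms j, div_self (hmspos j).ne']
    have h01 : ∫ θ, p θ * νs 0 θ / ms 0 ∂μ = 1 := by
      rw [integral_div, ← hms 0, div_self hm0.ne']
    rw [hj1, h01, sub_self]
end

section
/- Strong consistency of the ratio estimator: under the strong-law assumption for each chain, $\hat I^{[f]}(h,d) = \frac{\sum_{l=1}^k\sum_{i=1}^{n_l} Y^{[f]}_{i,l}}{\sum_{l=1}^k\sum_{i=1}^{n_l} Y_{i,l}}$ converges almost surely to $I^{[f]}(h) = \int f\,d\nu_{h,y}$, where $Y^{[f]}_{i,l} = \frac{f(\theta^{(l)}_i)\nu_h(\theta^{(l)}_i)}{\sum_s a_s\nu_{h_s}(\theta^{(l)}_i)/d_s}$ and $Y_{i,l} = Y^{[1]}_{i,l}$, since the numerator converges a.s. to $I^{[f]}(h)B(h,h_1)$ and the denominator converges a.s. to $B(h,h_1) > 0$. -/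
/-!
Pooling the chains with weights `a l`, the strong law for each chain turns numerator and
denominator of the estimator, divided by `n`, into mixtures `∑ l, a l * ∫ φ ∂ν_l` of the
stationary laws `ν_l = p νs_l / m_l · μ`. The estimator's weight `νh / ∑ s, a s νs_s / d_s` is,
up to the constant `m_1`, the ratio of `p νh` to the mixture density `∑ l, a l p νs_l / m_l`, so
`∑ l, a l * ∫ g νh / (∑ s, a s νs_s / d_s) ∂ν_l = ∫ g p νh ∂μ / m_1`; the support condition
covers the points where the mixture density vanishes. Taking `g = f` and `g = 1` and dividing,
the limit is `∫ f p νh ∂μ / m_h`.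
-/

open MeasureTheory Filter Finset Topology

section PooledAverages

variable {ι : Type*} [Fintype ι] {a : ι → ℝ} {nl : ι → ℕ → ℕ} {n : ℕ → ℕ}

theorem tendsto_pooled_mean (ha : ∀ l, 0 < a l) (hprop : ∀ l m, (nl l m : ℝ) = a l * n m)
    (hn : Tendsto n atTop atTop) {x : ι → ℕ → ℝ} {c : ι → ℝ}
    (hx : ∀ l, Tendsto (fun M : ℕ => (M : ℝ)⁻¹ * ∑ i ∈ range M, x l i) atTop (𝓝 (c l))) :
    Tendsto (fun m => (n m : ℝ)⁻¹ * ∑ l, ∑ i ∈ range (nl l m), x l i) atTop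
      (𝓝 (∑ l, a l * c l)) := by
  have hnl : ∀ l, Tendsto (nl l) atTop atTop := fun l => by
    rw [← tendsto_natCast_atTop_iff (R := ℝ), funext (hprop l)]
    exact (tendsto_natCast_atTop_atTop.comp hn).const_mul_atTop (ha l)
  -- `a l * (nl l m)⁻¹ = (n m)⁻¹` also when `n m = 0`, as then both sides vanish
  have hinv : ∀ l m, (n m : ℝ)⁻¹ = a l * (nl l m : ℝ)⁻¹ := fun l m => by
    rw [hprop, mul_inv, ← mul_assoc, mul_inv_cancel₀ (ha l).ne', one_mul]
  refine (tendsto_finsetSum _ fun l _ => ((hx l).comp (hnl l)).const_mul (a l)).congr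
    fun m => ?_
  rw [Finset.mul_sum]
  exact Finset.sum_congr rfl fun l _ => by rw [hinv l m, mul_assoc]; rfl

theorem tendsto_pooled_ratio (ha : ∀ l, 0 < a l) (hprop : ∀ l m, (nl l m : ℝ) = a l * n m)
    (hn : Tendsto n atTop atTop) {x y : ι → ℕ → ℝ} {c d : ι → ℝ}
    (hx : ∀ l, Tendsto (fun M : ℕ => (M : ℝ)⁻¹ * ∑ i ∈ range M, x l i) atTop (𝓝 (c l)))
    (hy : ∀ l, Tendsto (fun M : ℕ => (M : ℝ)⁻¹ * ∑ i ∈ range M, y l i) atTop (𝓝 (d l)))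
    (hd : ∑ l, a l * d l ≠ 0) :
    Tendsto (fun m => (∑ l, ∑ i ∈ range (nl l m), x l i) / ∑ l, ∑ i ∈ range (nl l m), y l i)
      atTop (𝓝 ((∑ l, a l * c l) / ∑ l, a l * d l)) := by
  have hmean := (tendsto_pooled_mean ha hprop hn hx).div (tendsto_pooled_mean ha hprop hn hy) hd
  refine hmean.congr' ?_
  filter_upwards [hn.eventually_ne_atTop 0] with m hm
  exact mul_div_mul_left _ _ (inv_ne_zero (Nat.cast_ne_zero.mpr hm))

theorem ae_tendsto_pooled_ratio {Ω Θ : Type*} [MeasurableSpace Ω] [MeasurableSpace Θ]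
    {P : Measure Ω} {ν : ι → Measure Θ} {θs : ι → ℕ → Ω → Θ}
    (hslln : ∀ l, ∀ φ : Θ → ℝ, Integrable φ (ν l) → ∀ᵐ ω ∂P,
      Tendsto (fun M : ℕ => 1 / (M : ℝ) * ∑ i ∈ range M, φ (θs l i ω)) atTop
        (𝓝 (∫ θ, φ θ ∂ν l)))
    (ha : ∀ l, 0 < a l) (hprop : ∀ l m, (nl l m : ℝ) = a l * n m) (hn : Tendsto n atTop atTop)
    {φ ψ : Θ → ℝ} (hφ : ∀ l, Integrable φ (ν l)) (hψ : ∀ l, Integrable ψ (ν l))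
    (hψ0 : ∑ l, a l * ∫ θ, ψ θ ∂ν l ≠ 0) :
    ∀ᵐ ω ∂P, Tendsto (fun m => (∑ l, ∑ i ∈ range (nl l m), φ (θs l i ω)) /
        ∑ l, ∑ i ∈ range (nl l m), ψ (θs l i ω)) atTop
      (𝓝 ((∑ l, a l * ∫ θ, φ θ ∂ν l) / ∑ l, a l * ∫ θ, ψ θ ∂ν l)) := by
  filter_upwards [ae_all_iff.2 fun l => hslln l φ (hφ l), ae_all_iff.2 fun l => hslln l ψ (hψ l)]
    with ω hωφ hωψ
  simp only [one_div] at hωφ hωψ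
  exact tendsto_pooled_ratio ha hprop hn hωφ hωψ hψ0

end PooledAverages

section Mixture

variable {ι : Type*} [Fintype ι] {a : ι → ℝ}

theorem div_sum_mul_le_inv {w : ι → ℝ} (ha : ∀ s, 0 ≤ a s) (hw : ∀ s, 0 ≤ w s) {l : ι}
    (hal : 0 < a l) : w l / ∑ s, a s * w s ≤ (a l)⁻¹ := by
  rcases (sum_nonneg fun s _ => mul_nonneg (ha s) (hw s)).eq_or_lt with h | h
  · rw [← h, div_zero]
    positivity
  · rw [div_le_iff₀ h, ← div_eq_inv_mul, le_div_iff₀ hal, mul_comm]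
    exact single_le_sum (f := fun s => a s * w s) (fun s _ => mul_nonneg (ha s) (hw s))
      (mem_univ l)

theorem abs_mul_div_sum_mul_le {w : ι → ℝ} (ha : ∀ s, 0 ≤ a s) (hw : ∀ s, 0 ≤ w s) {l : ι}
    (hal : 0 < a l) (p y : ℝ) :
    |p * w l * (y / ∑ s, a s * w s)| ≤ |p * y| / a l := by
  have hW : 0 ≤ ∑ s, a s * w s := sum_nonneg fun s _ => mul_nonneg (ha s) (hw s)
  calc |p * w l * (y / ∑ s, a s * w s)| = |p * y| * (w l / ∑ s, a s * w s) := by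
        rw [show p * w l * (y / ∑ s, a s * w s) = p * y * (w l / ∑ s, a s * w s) by ring,
          abs_mul, abs_of_nonneg (div_nonneg (hw l) hW)]
    _ ≤ |p * y| * (a l)⁻¹ := mul_le_mul_of_nonneg_left (div_sum_mul_le_inv ha hw hal) (abs_nonneg _)
    _ = |p * y| / a l := (div_eq_mul_inv _ _).symm

theorem sum_mul_mul_div_sum_mul {w : ι → ℝ} {y : ℝ} (hy : ∑ s, a s * w s = 0 → y = 0) (p : ℝ) :
    ∑ l, a l * (p * w l * (y / ∑ s, a s * w s)) = p * y := by
  by_cases h : ∑ s, a s * w s = 0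
  · simp [h, hy h]
  · calc ∑ l, a l * (p * w l * (y / ∑ s, a s * w s))
        = p * (∑ s, a s * w s) * (y / ∑ s, a s * w s) := by
          rw [mul_sum, sum_mul]
          exact sum_congr rfl fun l _ => by ring
      _ = p * y := by field_simp

variable {Θ : Type*} [MeasurableSpace Θ] {μ : Measure Θ} {q : Θ → ℝ}

theorem integrable_withDensity_ofReal_iff (hq : Measurable q) (hq0 : ∀ θ, 0 ≤ q θ)
    {g : Θ → ℝ} :
    Integrable g (μ.withDensity fun θ => ENNReal.ofReal (q θ)) ↔
      Integrable (fun θ => q θ * g θ) μ := by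
  rw [integrable_withDensity_iff hq.ennreal_ofReal (ae_of_all _ fun _ => ENNReal.ofReal_lt_top)]
  simp only [ENNReal.toReal_ofReal (hq0 _), mul_comm]

theorem integral_withDensity_ofReal (hq : Measurable q) (hq0 : ∀ θ, 0 ≤ q θ) (g : Θ → ℝ) :
    ∫ θ, g θ ∂μ.withDensity (fun θ => ENNReal.ofReal (q θ)) = ∫ θ, q θ * g θ ∂μ := by
  rw [integral_withDensity_eq_integral_toReal_smul hq.ennreal_ofReal
    (ae_of_all _ fun _ => ENNReal.ofReal_lt_top)]
  simp only [ENNReal.toReal_ofReal (hq0 _), smul_eq_mul]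

variable {w : ι → Θ → ℝ} {p v g : Θ → ℝ}

theorem integrable_withDensity_mixture (ha : ∀ l, 0 < a l) (hp : ∀ θ, 0 ≤ p θ)
    (hw : ∀ l θ, 0 ≤ w l θ) (hmp : Measurable p) (hmw : ∀ l, Measurable (w l))
    (hmv : Measurable v) (hmg : Measurable g) (hint : Integrable (fun θ => g θ * (p θ * v θ)) μ)
    (l : ι) :
    Integrable (fun θ => g θ * v θ / ∑ s, a s * w s θ)
      (μ.withDensity fun θ => ENNReal.ofReal (p θ * w l θ)) := by
  rw [integrable_withDensity_ofReal_iff (q := fun θ => p θ * w l θ) (hmp.mul (hmw l))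
    fun θ => mul_nonneg (hp θ) (hw l θ)]
  refine (hint.norm.div_const (a l)).mono' (by fun_prop) (ae_of_all _ fun θ => ?_)
  rw [Real.norm_eq_abs, Real.norm_eq_abs, show g θ * (p θ * v θ) = p θ * (g θ * v θ) by ring]
  exact abs_mul_div_sum_mul_le (fun s => (ha s).le) (hw · θ) (ha l) _ _

theorem sum_mul_integral_withDensity_mixture (ha : ∀ l, 0 < a l) (hp : ∀ θ, 0 ≤ p θ)
    (hw : ∀ l θ, 0 ≤ w l θ) (hmp : Measurable p) (hmw : ∀ l, Measurable (w l))
    (hmv : Measurable v) (hmg : Measurable g) (hint : Integrable (fun θ => g θ * (p θ * v θ)) μ)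
    (hsupp : ∀ θ, (∀ l, w l θ = 0) → v θ = 0) :
    ∑ l, a l * ∫ θ, g θ * v θ / ∑ s, a s * w s θ
        ∂μ.withDensity (fun θ => ENNReal.ofReal (p θ * w l θ)) =
      ∫ θ, g θ * (p θ * v θ) ∂μ := by
  have hq : ∀ l, Measurable fun θ => p θ * w l θ := fun l => hmp.mul (hmw l)
  have hq0 : ∀ l θ, 0 ≤ p θ * w l θ := fun l θ => mul_nonneg (hp θ) (hw l θ)
  have hvanish : ∀ θ, ∑ s, a s * w s θ = 0 → g θ * v θ = 0 := fun θ h => by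
    refine mul_eq_zero_of_right _ (hsupp θ fun l => ?_)
    have := (sum_eq_zero_iff_of_nonneg fun s _ => mul_nonneg (ha s).le (hw s θ)).1 h l (mem_univ l)
    exact (mul_eq_zero.1 this).resolve_left (ha l).ne'
  simp_rw [integral_withDensity_ofReal (hq _) (hq0 _), ← integral_const_mul]
  rw [← integral_finsetSum _ fun l _ => ((integrable_withDensity_ofReal_iff (hq l) (hq0 l)).1
    (integrable_withDensity_mixture ha hp hw hmp hmw hmv hmg hint l)).const_mul _]
  refine integral_congr_ae (ae_of_all _ fun θ => ?_)
  dsimp only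
  rw [sum_mul_mul_div_sum_mul (hvanish θ)]
  ring

end Mixture

theorem stmt18_general {Θ Ω : Type*} [MeasurableSpace Θ] [MeasurableSpace Ω]
    (P : Measure Ω)
    (μ : Measure Θ)
    (k : ℕ) [NeZero k]
    (p νh f : Θ → ℝ) (νs : Fin k → Θ → ℝ)
    (hp : ∀ θ, 0 ≤ p θ) (hνs : ∀ s θ, 0 ≤ νs s θ)
    (hmp : Measurable p) (hmνh : Measurable νh) (hmνs : ∀ s, Measurable (νs s))
    (hmf : Measurable f)
    (mh : ℝ) (ms : Fin k → ℝ)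
    (hmh : mh = ∫ θ, p θ * νh θ ∂μ)
    (hmhpos : 0 < mh) (hmspos : ∀ s, 0 < ms s)
    (hinth : Integrable (fun θ => p θ * νh θ) μ)
    (hintf : Integrable (fun θ => f θ * (p θ * νh θ / mh)) μ)
    (a : Fin k → ℝ) (ha : ∀ l, 0 < a l)
    (hsupp : ∀ θ, (∀ s, νs s θ = 0) → νh θ = 0)
    (nl : Fin k → ℕ → ℕ) (n : ℕ → ℕ)
    (hprop : ∀ l m, (nl l m : ℝ) = a l * (n m : ℝ))
    (hninf : Tendsto n atTop atTop)
    (θs : Fin k → ℕ → Ω → Θ)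
    (hSLLN : ∀ l, ∀ φ : Θ → ℝ,
      Integrable φ (μ.withDensity fun θ => ENNReal.ofReal (p θ * νs l θ / ms l)) →
      ∀ᵐ ω ∂P, Tendsto
        (fun (M : ℕ) => (1 / (M : ℝ)) * ∑ i ∈ Finset.range M, φ (θs l i ω))
        atTop
        (nhds (∫ x, φ x ∂(μ.withDensity fun θ => ENNReal.ofReal (p θ * νs l θ / ms l))))) :
    ∀ᵐ ω ∂P, Tendsto (fun m =>
        (∑ l, ∑ i ∈ Finset.range (nl l m),
            f (θs l i ω) * νh (θs l i ω) /
              (∑ s, a s * νs s (θs l i ω) / (ms s / ms 0))) /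
        (∑ l, ∑ i ∈ Finset.range (nl l m),
            νh (θs l i ω) / (∑ s, a s * νs s (θs l i ω) / (ms s / ms 0))))
      atTop (nhds (∫ θ, f θ * (p θ * νh θ / mh) ∂μ)) := by
  simp_rw [mul_div_assoc] at hSLLN
  have hw : ∀ l θ, 0 ≤ νs l θ / ms l := fun l θ => div_nonneg (hνs l θ) (hmspos l).le
  have hmw : ∀ l, Measurable fun θ => νs l θ / ms l := fun l => (hmνs l).div_const _
  have hsupp' : ∀ θ, (∀ l, νs l θ / ms l = 0) → νh θ = 0 := fun θ h =>
    hsupp θ fun l => (div_eq_zero_iff.1 (h l)).resolve_right (hmspos l).ne'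
  have hD : ∀ θ, ∑ s, a s * νs s θ / (ms s / ms 0) = ms 0 * ∑ s, a s * (νs s θ / ms s) :=
    fun θ => by
      rw [Finset.mul_sum]
      exact Finset.sum_congr rfl fun s _ => by field_simp [(hmspos s).ne', (hmspos 0).ne']
  -- the common factor `ms 0` of all the weights cancels in the ratio
  simp_rw [hD, div_mul_eq_div_div_swap, ← Finset.sum_div,
    div_div_div_cancel_right₀ (hmspos 0).ne']
  have hf : Integrable (fun θ => f θ * (p θ * νh θ)) μ :=
    (hintf.mul_const mh).congr <| ae_of_all _ fun θ => by field_simp [hmhpos.ne']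
  have h1 : Integrable (fun θ => (1 : ℝ) * (p θ * νh θ)) μ := by simpa only [one_mul] using hinth
  have hlim : (∫ θ, f θ * (p θ * νh θ) ∂μ) / ∫ θ, (1 : ℝ) * (p θ * νh θ) ∂μ =
      ∫ θ, f θ * (p θ * νh θ / mh) ∂μ := by
    simp_rw [one_mul, ← hmh, ← integral_div, mul_div_assoc]
  have hint := fun {g : Θ → ℝ} (hmg : Measurable g) =>
    integrable_withDensity_mixture (μ := μ) ha hp hw hmp hmw hmνh hmg
  have hmix := fun {g : Θ → ℝ} (hmg : Measurable g) =>
    sum_mul_integral_withDensity_mixture (μ := μ) ha hp hw hmp hmw hmνh hmg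
  have := ae_tendsto_pooled_ratio hSLLN ha hprop hninf (hint hmf hf) (hint measurable_const h1)
    (by rw [hmix measurable_const h1 hsupp']; simpa only [one_mul, ← hmh] using hmhpos.ne')
  rw [hmix hmf hf hsupp', hmix measurable_const h1 hsupp', hlim] at this
  simpa only [one_mul] using this

/-- Strong consistency of the ratio estimator
`Î^{[f]}(h,d) = (∑_l ∑_i Y^{[f]}_{i,l}) / (∑_l ∑_i Y_{i,l})`, where
`Y^{[f]}_{i,l} = f(θ^{(l)}_i) ν_h(θ^{(l)}_i) / (∑_s a_s ν_{h_s}(θ^{(l)}_i)/d_s)` and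
`Y = Y^{[1]}`: under a strong law for each chain (with stationary distribution the
posterior `ν_{h_l,y}`), it converges a.s. to `I^{[f]}(h) = ∫ f dν_{h,y}`. -/
theorem stmt18 {Θ Ω : Type*} [MeasurableSpace Θ] [MeasurableSpace Ω]
    (P : Measure Ω) [IsProbabilityMeasure P]
    (μ : Measure Θ) [SigmaFinite μ]
    (k : ℕ) [NeZero k]
    (p νh f : Θ → ℝ) (νs : Fin k → Θ → ℝ)
    (hp : ∀ θ, 0 ≤ p θ) (hνh : ∀ θ, 0 ≤ νh θ) (hνs : ∀ s θ, 0 ≤ νs s θ)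
    (hmp : Measurable p) (hmνh : Measurable νh) (hmνs : ∀ s, Measurable (νs s))
    (hmf : Measurable f)
    (mh : ℝ) (ms : Fin k → ℝ)
    (hmh : mh = ∫ θ, p θ * νh θ ∂μ) (hms : ∀ s, ms s = ∫ θ, p θ * νs s θ ∂μ)
    (hmhpos : 0 < mh) (hmspos : ∀ s, 0 < ms s)
    (hinth : Integrable (fun θ => p θ * νh θ) μ)
    (hints : ∀ s, Integrable (fun θ => p θ * νs s θ) μ)
    (hintf : Integrable (fun θ => f θ * (p θ * νh θ / mh)) μ)
    (a : Fin k → ℝ) (ha : ∀ l, 0 < a l) (hasum : ∑ l, a l = 1)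
    (hsupp : ∀ θ, (∀ s, νs s θ = 0) → νh θ = 0)
    (nl : Fin k → ℕ → ℕ) (n : ℕ → ℕ)
    (hn : ∀ m, n m = ∑ l, nl l m)
    (hprop : ∀ l m, (nl l m : ℝ) = a l * (n m : ℝ))
    (hninf : Tendsto n atTop atTop)
    (θs : Fin k → ℕ → Ω → Θ)
    (hSLLN : ∀ l, ∀ φ : Θ → ℝ,
      Integrable φ (μ.withDensity fun θ => ENNReal.ofReal (p θ * νs l θ / ms l)) →
      ∀ᵐ ω ∂P, Tendsto
        (fun (M : ℕ) => (1 / (M : ℝ)) * ∑ i ∈ Finset.range M, φ (θs l i ω))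
        atTop
        (nhds (∫ x, φ x ∂(μ.withDensity fun θ => ENNReal.ofReal (p θ * νs l θ / ms l))))) :
    ∀ᵐ ω ∂P, Tendsto (fun m =>
        (∑ l, ∑ i ∈ Finset.range (nl l m),
            f (θs l i ω) * νh (θs l i ω) /
              (∑ s, a s * νs s (θs l i ω) / (ms s / ms 0))) /
        (∑ l, ∑ i ∈ Finset.range (nl l m),
            νh (θs l i ω) / (∑ s, a s * νs s (θs l i ω) / (ms s / ms 0))))
      atTop (nhds (∫ θ, f θ * (p θ * νh θ / mh) ∂μ)) :=
  stmt18_general P μ k p νh f νs hp hνs hmp hmνh hmνs hmf mh ms hmh hmhpos hmspos hinth hintf a ha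
    hsupp nl n hprop hninf θs hSLLN
end
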